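/- arXiv:2501.08753 — 6 statements merged into one kernel-verified Lean document; each statement's English description precedes it below -/
import Mathlib

section
/- Let a, N > 0 and r ∈ ℝ, A > 0, and let g : (0,∞) → ℝ satisfy g(x) → 0 as x → ∞. For z > 0 sufficiently small, let x = x(z) be the unique large solution of A·x^r·exp(−a·x^{1/N})·(1+g(x)) = z. Then x(z) ~ a^{−N}·(−ln z)^N as z → 0⁺, i.e., lim_{z→0⁺} x(z)·aᴺ/(−ln z)^N = 1. -/
open Filter Real

private lemma phi_tendsto (a N r A : ℝ) (ha : 0 < a) (hN : 0 < N)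
    (g : ℝ → ℝ) (hg : Tendsto g atTop (nhds 0)) :
    Tendsto (fun t => (r * Real.log t + Real.log A + Real.log (1 + g t)) / (a * t ^ (1/N)))
      atTop (nhds 0) := by
  have hden : Tendsto (fun t : ℝ => a * t ^ (1/N)) atTop atTop :=
    (tendsto_rpow_atTop (by positivity)).const_mul_atTop ha
  have h1 : Tendsto (fun t => r * Real.log t / (a * t ^ (1/N))) atTop (nhds 0) := by
    have hlo : Tendsto (fun t => Real.log t / t ^ (1/N)) atTop (nhds 0) :=
      (isLittleO_log_rpow_atTop (by positivity)).tendsto_div_nhds_zero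
    have := hlo.const_mul (r / a)
    rw [mul_zero] at this
    refine this.congr (fun t => ?_)
    rw [div_mul_div_comm]
  have h2 : Tendsto (fun t => (Real.log A + Real.log (1 + g t)) / (a * t ^ (1/N)))
      atTop (nhds 0) := by
    have hnum : Tendsto (fun t => Real.log A + Real.log (1 + g t)) atTop
        (nhds (Real.log A + Real.log (1 + 0))) := by
      refine tendsto_const_nhds.add ?_
      exact (Real.continuousAt_log (by norm_num)).tendsto.comp (tendsto_const_nhds.add hg)
    exact hnum.div_atTop hden
  have := h1.add h2
  rw [add_zero] at this
  refine this.congr (fun t => ?_)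
  rw [← add_div]
  ring_nf

/-- Let `a, A, N > 0`, `r ∈ ℝ`, and `g → 0` at infinity. If `x(z)` solves
`A x^r exp(−a x^{1/N})(1 + g(x)) = z` for small `z > 0`, with `x(z) → ∞` as `z → 0⁺`,
then `x(z) ~ a^{−N} (−ln z)^N` as `z → 0⁺`. -/
theorem asymptotic_inverse (a A N r : ℝ) (ha : 0 < a) (hA : 0 < A) (hN : 0 < N)
    (g : ℝ → ℝ) (hg : Tendsto g atTop (nhds 0))
    (x : ℝ → ℝ) (hx : Tendsto x (nhdsWithin 0 (Set.Ioi 0)) atTop)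
    (heq : ∀ᶠ z in nhdsWithin 0 (Set.Ioi 0),
      A * (x z) ^ r * Real.exp (-a * (x z) ^ (1/N)) * (1 + g (x z)) = z) :
    Tendsto (fun z => x z * a ^ N / (-Real.log z) ^ N)
      (nhdsWithin 0 (Set.Ioi 0)) (nhds 1) := by
  set l := nhdsWithin (0:ℝ) (Set.Ioi 0) with hl
  have hxpos : ∀ᶠ z in l, 0 < x z := hx.eventually (eventually_gt_atTop 0)
  have hgx : Tendsto (fun z => g (x z)) l (nhds 0) := hg.comp hx
  have hgpos : ∀ᶠ z in l, 0 < 1 + g (x z) := by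
    filter_upwards [hgx.eventually (eventually_gt_nhds (show (-1:ℝ) < 0 by norm_num))]
      with z hz
    linarith
  have hzpos : ∀ᶠ z in l, 0 < z := eventually_mem_nhdsWithin
  have hlog : Tendsto Real.log l atBot := Real.tendsto_log_nhdsGT_zero
  have hLpos : ∀ᶠ z in l, 0 < -Real.log z := by
    filter_upwards [hlog.eventually (eventually_lt_atBot 0)] with z hz; linarith
  have hkey : ∀ᶠ z in l, -Real.log z
      = a * (x z) ^ (1/N) - (r * Real.log (x z) + Real.log A + Real.log (1 + g (x z))) := by
    filter_upwards [heq, hxpos, hgpos, hzpos] with z he hxz hgz hz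
    have h := congrArg Real.log he
    rw [Real.log_mul (by positivity) hgz.ne', Real.log_mul (by positivity) (Real.exp_ne_zero _),
      Real.log_mul hA.ne' (by positivity), Real.log_exp, Real.log_rpow hxz] at h
    linarith
  have hcorr : Tendsto (fun z =>
      (r * Real.log (x z) + Real.log A + Real.log (1 + g (x z))) / (a * (x z) ^ (1/N)))
      l (nhds 0) := (phi_tendsto a N r A ha hN g hg).comp hx
  have hmain : Tendsto (fun z => -Real.log z / (a * (x z) ^ (1/N))) l (nhds 1) := by
    have h := (tendsto_const_nhds.sub hcorr : Tendsto
      (fun z => 1 - (r * Real.log (x z) + Real.log A + Real.log (1 + g (x z)))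
        / (a * (x z) ^ (1/N))) l (nhds (1 - 0)))
    rw [sub_zero] at h
    refine Tendsto.congr' ?_ h
    filter_upwards [hkey, hxpos] with z hk hxz
    have hau : a * (x z) ^ (1/N) ≠ 0 := by positivity
    rw [hk, sub_div, div_self hau]
  have hinv : Tendsto (fun z => a * (x z) ^ (1/N) / (-Real.log z)) l (nhds 1) := by
    have := hmain.inv₀ one_ne_zero
    rw [inv_one] at this
    refine this.congr (fun z => ?_)
    rw [inv_div]
  have hfin : Tendsto (fun z => (a * (x z) ^ (1/N) / (-Real.log z)) ^ N) l (nhds 1) := by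
    have hc : ContinuousAt (fun t : ℝ => t ^ N) 1 :=
      Real.continuousAt_rpow_const 1 N (Or.inl one_ne_zero)
    have := hc.tendsto.comp hinv
    rwa [Real.one_rpow] at this
  refine Tendsto.congr' ?_ hfin
  filter_upwards [hxpos, hLpos] with z hxz hLz
  have hu : (0:ℝ) ≤ a * (x z) ^ (1/N) := by positivity
  rw [Real.div_rpow hu hLz.le, Real.mul_rpow ha.le (by positivity),
    ← Real.rpow_mul hxz.le, one_div, inv_mul_cancel₀ hN.ne', Real.rpow_one, mul_comm]
end

section
/- Let X₁ ~ N(0,σ₁²) and X₂ ~ N(0,σ₂²) be independent centred normal random variables. Then the density of the product Z = X₁X₂ is f_Z(z) = (1/(π σ₁ σ₂)) · K₀(|z|/(σ₁σ₂)) for z ≠ 0, where K₀ is the modified Bessel function of the second kind of order 0. -/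
/-!
By independence, the law of `X₁X₂` is the multiplicative convolution of the two Gaussian laws;
as the first has no atom at `0`, it has density `z ↦ ∫ f₁(x) f₂(z/x) dx/|x|`. For `z ≠ 0` the
exponent `x²/(2σ₁²) + z²/(2σ₂²x²)` equals `(β/2)(x²/u + u/x²)` with `β = |z|/(σ₁σ₂)` and
`u = σ₁|z|/σ₂`, and the substitution `x = √u e^{t/2}` turns `∫₀^∞ e^{-(β/2)(x²/u + u/x²)} dx/x`
into `½ ∫_ℝ e^{-β cosh t} dt = K₀(β)`.
-/

open MeasureTheory ProbabilityTheory Real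

/-- The modified Bessel function of the second kind,
`K_ν(x) = ∫₀^∞ e^{−x cosh t} cosh(νt) dt`. -/
noncomputable def besselK (ν x : ℝ) : ℝ :=
  ∫ t in Set.Ioi (0 : ℝ), Real.exp (-x * Real.cosh t) * Real.cosh (ν * t)

open Set
open scoped ENNReal NNReal

theorem lintegral_comp_abs (f : ℝ → ℝ≥0∞) :
    ∫⁻ x, f |x| = 2 * ∫⁻ x in Ioi 0, f x := by
  have hIoi : ∫⁻ x in Ioi 0, f |x| = ∫⁻ x in Ioi 0, f x :=
    setLIntegral_congr_fun measurableSet_Ioi fun x hx => by rw [abs_of_pos hx]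
  have hIio : ∫⁻ x in Iio 0, f |x| = ∫⁻ x in Ioi 0, f |x| := by
    simpa using (Measure.measurePreserving_neg volume).setLIntegral_comp_preimage_emb
      measurableEmbedding_neg (fun x => f |x|) (Ioi 0)
  rw [← lintegral_add_compl _ measurableSet_Ioi, compl_Ioi, ← restrict_Iio_eq_restrict_Iic,
    hIio, hIoi, two_mul]

theorem integrableOn_exp_neg_mul_cosh {β : ℝ} (hβ : 0 < β) :
    IntegrableOn (fun t => exp (-β * cosh t)) (Ioi 0) := by
  refine (exp_neg_integrableOn_Ioi 0 hβ).mono' (by fun_prop) ?_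
  filter_upwards [ae_restrict_mem measurableSet_Ioi] with t ht
  rw [norm_of_nonneg (exp_pos _).le, exp_le_exp, neg_mul, neg_mul, neg_le_neg_iff]
  exact mul_le_mul_of_nonneg_left
    ((self_le_sinh_iff.2 (le_of_lt ht)).trans (sinh_lt_cosh t).le) hβ.le

theorem lintegral_exp_neg_mul_cosh {β : ℝ} (hβ : 0 < β) :
    ∫⁻ t, ENNReal.ofReal (exp (-β * cosh t)) = 2 * ENNReal.ofReal (besselK 0 β) := by
  simp only [besselK, zero_mul, cosh_zero, mul_one]
  rw [ofReal_integral_eq_lintegral_ofReal (integrableOn_exp_neg_mul_cosh hβ)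
    (.of_forall fun t => (exp_pos _).le), ← lintegral_comp_abs]
  simp only [cosh_abs]

theorem setLIntegral_Ioi_exp_neg_mul_add_div {β u : ℝ} (hβ : 0 < β) (hu : 0 < u) :
    ∫⁻ x in Ioi 0, ENNReal.ofReal (exp (-(β / 2) * (x ^ 2 / u + u / x ^ 2)) / x) =
      ENNReal.ofReal (besselK 0 β) := by
  set φ : ℝ → ℝ := fun t => √u * exp (t / 2)
  have hφ_pos (t : ℝ) : 0 < φ t := by positivity
  have hφ_sq (t : ℝ) : φ t ^ 2 = u * exp t := by
    rw [mul_pow, sq_sqrt hu.le, ← exp_nat_mul]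
    ring_nf
  have hφ_deriv (t : ℝ) : HasDerivAt φ (φ t / 2) t := by
    refine (((hasDerivAt_id' t).div_const 2).exp.const_mul √u).congr_deriv ?_
    simp only [φ]
    ring
  have hφ_range : φ '' univ = Ioi 0 := by
    refine (image_univ).trans (Subset.antisymm (range_subset_iff.2 hφ_pos) fun y hy => ?_)
    refine ⟨2 * log (y / √u), ?_⟩
    simp only [φ]
    rw [mul_div_cancel_left₀ _ two_ne_zero, exp_log (div_pos hy (sqrt_pos.2 hu))]
    field_simp
  have hφ_inj : InjOn φ univ := fun s _ t _ h => by
    simpa using mul_left_cancel₀ (sqrt_pos.2 hu).ne' h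
  rw [← hφ_range, lintegral_image_eq_lintegral_abs_deriv_mul MeasurableSet.univ
    (fun t _ => (hφ_deriv t).hasDerivWithinAt) hφ_inj, Measure.restrict_univ]
  have hpoint (t : ℝ) : ENNReal.ofReal |φ t / 2| *
      ENNReal.ofReal (exp (-(β / 2) * (φ t ^ 2 / u + u / φ t ^ 2)) / φ t) =
      2⁻¹ * ENNReal.ofReal (exp (-β * cosh t)) := by
    have h2 : (2⁻¹ : ℝ≥0∞) = ENNReal.ofReal 2⁻¹ := by
      rw [ENNReal.ofReal_inv_of_pos two_pos, ENNReal.ofReal_ofNat]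
    rw [abs_of_pos (half_pos (hφ_pos t)), ← ENNReal.ofReal_mul (half_pos (hφ_pos t)).le, h2,
      ← ENNReal.ofReal_mul (by norm_num)]
    congr 1
    have := (hφ_pos t).ne'
    rw [hφ_sq, cosh_eq, exp_neg]
    field_simp
  simp only [hpoint]
  rw [lintegral_const_mul' _ _ (by simp), lintegral_exp_neg_mul_cosh hβ, ← mul_assoc,
    ENNReal.inv_mul_cancel two_ne_zero ENNReal.ofNat_ne_top, one_mul]

theorem lintegral_exp_neg_mul_add_div_div_abs {β u : ℝ} (hβ : 0 < β) (hu : 0 < u) :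
    ∫⁻ x, ENNReal.ofReal (exp (-(β / 2) * (x ^ 2 / u + u / x ^ 2)) / |x|) =
      2 * ENNReal.ofReal (besselK 0 β) := by
  rw [← setLIntegral_Ioi_exp_neg_mul_add_div hβ hu, ← lintegral_comp_abs]
  simp only [sq_abs]

theorem map_const_mul_withDensity {c : ℝ} (hc : c ≠ 0) {f : ℝ → ℝ≥0∞} (hf : Measurable f) :
    (volume.withDensity f).map (c * ·) =
      volume.withDensity fun z => f (z / c) * ENNReal.ofReal |c|⁻¹ := by
  ext s hs
  rw [Measure.map_apply (measurable_const_mul c) hs, withDensity_apply _ hs,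
    withDensity_apply _ (measurable_const_mul c hs)]
  calc ∫⁻ x in (c * ·) ⁻¹' s, f x = ∫⁻ x in (c * ·) ⁻¹' s, f (c * x / c) := by
        simp only [mul_div_cancel_left₀ _ hc]
    _ = ∫⁻ z in s, f (z / c) ∂volume.map (c * ·) :=
        (setLIntegral_map hs (hf.comp (measurable_div_const c)) (measurable_const_mul c)).symm
    _ = ∫⁻ z in s, f (z / c) * ENNReal.ofReal |c|⁻¹ := by
        rw [Real.map_volume_mul_left hc, Measure.restrict_smul, lintegral_smul_measure,
          lintegral_mul_const' _ _ ENNReal.ofReal_ne_top, abs_inv, smul_eq_mul, mul_comm]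

theorem mconv_withDensity {μ : Measure ℝ} [SFinite μ] (hμ : μ {0} = 0) {f : ℝ → ℝ≥0∞}
    (hf : Measurable f) :
    μ ∗ₘ volume.withDensity f =
      volume.withDensity fun z => ∫⁻ x, f (z / x) * ENNReal.ofReal |x|⁻¹ ∂μ := by
  ext s hs
  rw [withDensity_apply _ hs, Measure.mconv, Measure.map_apply measurable_mul hs,
    Measure.prod_apply (measurable_mul hs), lintegral_lintegral_swap (by fun_prop)]
  refine lintegral_congr_ae ?_
  filter_upwards [measure_eq_zero_iff_ae_notMem.1 hμ] with x hx
  rw [← withDensity_apply _ hs, ← map_const_mul_withDensity hx hf,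
    Measure.map_apply (measurable_const_mul x) hs]
  rfl

theorem gaussianPDFReal_mul_gaussianPDFReal_div {a b : ℝ≥0} (ha : 0 < a) (hb : 0 < b) {z x : ℝ}
    (hz : z ≠ 0) (hx : x ≠ 0) :
    gaussianPDFReal 0 (a ^ 2) x * gaussianPDFReal 0 (b ^ 2) (z / x) =
      (2 * π * a * b)⁻¹ *
        exp (-(|z| / (a * b) / 2) * (x ^ 2 / (a * |z| / b) + a * |z| / b / x ^ 2)) := by
  have ha' : (0 : ℝ) < a := ha
  have hb' : (0 : ℝ) < b := hb
  have hz' : 0 < |z| := abs_pos.2 hz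
  have hexp : -x ^ 2 / (2 * a ^ 2) + -(z / x) ^ 2 / (2 * b ^ 2) =
      -(|z| / (a * b) / 2) * (x ^ 2 / (a * |z| / b) + a * |z| / b / x ^ 2) := by
    rw [div_pow, ← sq_abs z]
    field_simp
    ring
  have hsqrt (c : ℝ≥0) : √(2 * π * (c : ℝ) ^ 2) = √(2 * π) * c := by
    rw [sqrt_mul' _ (sq_nonneg _), sqrt_sq c.coe_nonneg]
  simp only [gaussianPDFReal, sub_zero, hsqrt, NNReal.coe_pow, ← hexp, exp_add]
  field_simp
  rw [sq_sqrt (by positivity)]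

theorem lintegral_gaussianPDF_div_mul_inv_abs {a b : ℝ≥0} (ha : 0 < a) (hb : 0 < b) {z : ℝ}
    (hz : z ≠ 0) :
    ∫⁻ x, gaussianPDF 0 (b ^ 2) (z / x) * ENNReal.ofReal |x|⁻¹ ∂gaussianReal 0 (a ^ 2) =
      ENNReal.ofReal (1 / (π * a * b) * besselK 0 (|z| / (a * b))) := by
  have ha' : (0 : ℝ) < a := ha
  have hb' : (0 : ℝ) < b := hb
  have hz' : 0 < |z| := abs_pos.2 hz
  have hpoint (x : ℝ) : gaussianPDF 0 (a ^ 2) x * (gaussianPDF 0 (b ^ 2) (z / x) *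
      ENNReal.ofReal |x|⁻¹) = ENNReal.ofReal (2 * π * a * b)⁻¹ * ENNReal.ofReal
        (exp (-(|z| / (a * b) / 2) * (x ^ 2 / (a * |z| / b) + a * |z| / b / x ^ 2)) / |x|) := by
    rcases eq_or_ne x 0 with rfl | hx
    · simp
    simp only [gaussianPDF, ← mul_assoc, ← ENNReal.ofReal_mul (gaussianPDFReal_nonneg _ _ _),
      ← ENNReal.ofReal_mul (inv_nonneg.2 (by positivity : (0 : ℝ) ≤ 2 * π * a * b)),
      gaussianPDFReal_mul_gaussianPDFReal_div ha hb hz hx]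
    ring_nf
  rw [gaussianReal_of_var_ne_zero _ (pow_ne_zero 2 ha.ne'),
    lintegral_withDensity_eq_lintegral_mul _ (measurable_gaussianPDF _ _) (by fun_prop)]
  simp only [Pi.mul_apply, hpoint]
  rw [lintegral_const_mul _ (by fun_prop),
    lintegral_exp_neg_mul_add_div_div_abs (by positivity) (by positivity),
    ← ENNReal.ofReal_ofNat, ← ENNReal.ofReal_mul (by positivity),
    ← ENNReal.ofReal_mul (by positivity)]
  congr 1
  field_simp

theorem product_gaussian_density_general {Ω : Type*} [MeasurableSpace Ω] (μ : Measure Ω)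
    (σ1 σ2 : NNReal) (h1 : 0 < σ1) (h2 : 0 < σ2)
    (X1 X2 : Ω → ℝ)
    (hInd : IndepFun X1 X2 μ)
    (hX1 : Measure.map X1 μ = gaussianReal 0 (σ1^2))
    (hX2 : Measure.map X2 μ = gaussianReal 0 (σ2^2)) :
    Measure.map (fun ω => X1 ω * X2 ω) μ =
      volume.withDensity (fun z => ENNReal.ofReal
        ((1 / (π * (σ1 : ℝ) * (σ2 : ℝ))) * besselK 0 (|z| / ((σ1 : ℝ) * (σ2 : ℝ))))) := by
  have hv1 : σ1 ^ 2 ≠ 0 := pow_ne_zero 2 h1.ne'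
  have hv2 : σ2 ^ 2 ≠ 0 := pow_ne_zero 2 h2.ne'
  have hlaw : μ.map (X1 * X2) = gaussianReal 0 (σ1 ^ 2) ∗ₘ gaussianReal 0 (σ2 ^ 2) := by
    rw [hInd.map_mul_eq_map_mconv_map₀', hX1, hX2]
    · exact .of_map_ne_zero (hX1 ▸ IsProbabilityMeasure.ne_zero _)
    · exact .of_map_ne_zero (hX2 ▸ IsProbabilityMeasure.ne_zero _)
    · rw [hX1]; infer_instance
    · rw [hX2]; infer_instance
  have hnoatom : gaussianReal 0 (σ1 ^ 2) {0} = 0 :=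
    (nullSingletonClass_gaussianReal hv1).measure_singleton 0
  rw [← Pi.mul_def, hlaw, gaussianReal_of_var_ne_zero 0 hv2,
    mconv_withDensity hnoatom (measurable_gaussianPDF 0 _)]
  refine withDensity_congr_ae ?_
  filter_upwards [Measure.ae_ne volume 0] with z hz
  exact lintegral_gaussianPDF_div_mul_inv_abs h1 h2 hz

/-- If `X₁ ~ N(0, σ₁²)` and `X₂ ~ N(0, σ₂²)` are independent, then the product
`Z = X₁X₂` has density `f_Z(z) = (1/(π σ₁ σ₂)) K₀(|z|/(σ₁σ₂))`. -/
theorem product_gaussian_density {Ω : Type*} [MeasurableSpace Ω] (μ : Measure Ω)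
    [IsProbabilityMeasure μ] (σ1 σ2 : NNReal) (h1 : 0 < σ1) (h2 : 0 < σ2)
    (X1 X2 : Ω → ℝ) (hm1 : Measurable X1) (hm2 : Measurable X2)
    (hInd : IndepFun X1 X2 μ)
    (hX1 : Measure.map X1 μ = gaussianReal 0 (σ1^2))
    (hX2 : Measure.map X2 μ = gaussianReal 0 (σ2^2)) :
    Measure.map (fun ω => X1 ω * X2 ω) μ =
      volume.withDensity (fun z => ENNReal.ofReal
        ((1 / (π * (σ1 : ℝ) * (σ2 : ℝ))) * besselK 0 (|z| / ((σ1 : ℝ) * (σ2 : ℝ))))) :=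
  product_gaussian_density_general μ σ1 σ2 h1 h2 X1 X2 hInd hX1 hX2
end

section
/- Let (X,Y) be bivariate normal with mean zero, variances σ₁², σ₂², and correlation ρ ∈ (−1,1). Then the product XY has the variance-gamma distribution VG(0, 1/(σ₁σ₂(1−ρ²)), ρ/(σ₁σ₂(1−ρ²)), 0); equivalently, the density of Z = XY is f_Z(z) = (1/(π σ₁ σ₂ √(1−ρ²))) · exp(ρ z/(σ₁σ₂(1−ρ²))) · K₀(|z|/(σ₁σ₂(1−ρ²))) for z ≠ 0. -/
/-!
Slicing the plane along the hyperbolas `xy = z` (Tonelli, then `y = z / x`, which costs a factor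
`1 / |x|`) shows that `XY` has density `z ↦ ∫ f(x, z / x) / |x| dx`. On the hyperbola `xy = z` the
exponent of the bivariate normal density splits as `ρz / (σ₁σ₂(1 - ρ²)) - (a x² + b / x²)` with
`a = 1 / (2σ₁²(1 - ρ²))` and `b = z² / (2σ₂²(1 - ρ²))`, and the substitution
`x = (b / a)^{1/4} e^{t/2}` turns `∫₀^∞ e^{-(a x² + b / x²)} dx / x` into
`∫₀^∞ e^{-2√(ab) cosh t} dt = K₀(2√(ab))`.
-/

open MeasureTheory ProbabilityTheory Real

open Set
open scoped ENNReal

lemma lintegral_eq_two_mul_setLIntegral_Ioi {f : ℝ → ℝ≥0∞} (hf : ∀ x, f (-x) = f x) :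
    ∫⁻ x, f x = 2 * ∫⁻ x in Ioi 0, f x := by
  have hneg : ∫⁻ x in Iic 0, f x = ∫⁻ x in Ioi 0, f x := by
    rw [← (Measure.measurePreserving_neg (volume : Measure ℝ)).setLIntegral_comp_preimage_emb
      (Homeomorph.neg ℝ).measurableEmbedding]
    simp only [hf, neg_preimage, neg_Iic, neg_zero]
    exact setLIntegral_congr Ioi_ae_eq_Ici.symm
  rw [← lintegral_add_compl f measurableSet_Ioi, compl_Ioi, hneg, two_mul]

lemma sq_div_four_le_cosh (t : ℝ) : t ^ 2 / 4 ≤ cosh t := by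
  rw [← cosh_abs, cosh_eq]
  nlinarith [quadratic_le_exp_of_nonneg (abs_nonneg t), exp_pos (-|t|), sq_abs t, abs_nonneg t]

lemma integrable_exp_neg_mul_cosh {s : ℝ} (hs : 0 < s) :
    Integrable fun t : ℝ => exp (-s * cosh t) := by
  refine (integrable_exp_neg_mul_sq (b := s / 4) (by positivity)).mono'
    (by fun_prop) (.of_forall fun t => ?_)
  rw [norm_of_nonneg (exp_pos _).le, exp_le_exp]
  nlinarith [sq_div_four_le_cosh t]

lemma besselK_zero_eq_integral_div_two (x : ℝ) :
    besselK 0 x = (∫ t, exp (-x * cosh t)) / 2 := by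
  have h := integral_comp_abs (f := fun t => exp (-x * cosh t))
  simp only [cosh_abs] at h
  simp only [besselK, zero_mul, cosh_zero, mul_one, h]
  ring

lemma ofReal_besselK_zero {s : ℝ} (hs : 0 < s) :
    ENNReal.ofReal (besselK 0 s) = ∫⁻ t, ENNReal.ofReal (exp (-s * cosh t) / 2) := by
  rw [besselK_zero_eq_integral_div_two, ← integral_div,
    ofReal_integral_eq_lintegral_ofReal ((integrable_exp_neg_mul_cosh hs).div_const 2)
      (.of_forall fun t => by positivity)]

lemma setLIntegral_Ioi_exp_neg_mul_sq_add_div_sq_div {a b : ℝ} (ha : 0 < a) (hb : 0 < b) :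
    ∫⁻ x in Ioi 0, ENNReal.ofReal (exp (-(a * x ^ 2 + b / x ^ 2)) / x) =
      ENNReal.ofReal (besselK 0 (2 * √(a * b))) := by
  set q := √(a * b)
  have hq : 0 < q := by positivity
  have hq2 : q ^ 2 = a * b := sq_sqrt (by positivity)
  set r := √(q / a)
  have hr : 0 < r := by positivity
  have hr2 : r ^ 2 = q / a := sq_sqrt (by positivity)
  set φ : ℝ → ℝ := fun t => r * exp (t / 2)
  have hφ_sq : ∀ t, φ t ^ 2 = q / a * exp t := fun t => by
    rw [mul_pow, hr2, ← exp_nat_mul]; congr 2; push_cast; ring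
  have hφ_exponent : ∀ t, a * φ t ^ 2 + b / φ t ^ 2 = 2 * q * cosh t := fun t => by
    rw [hφ_sq, cosh_eq, exp_neg]
    field_simp
    linear_combination (-1 : ℝ) * hq2
  have hφ_deriv : ∀ t ∈ univ, HasDerivWithinAt φ (φ t / 2) univ t := fun t _ =>
    ((((hasDerivAt_id t).div_const 2).exp.const_mul r).congr_deriv (by simp only [φ, id]; ring)
      ).hasDerivWithinAt
  have hφ_inj : InjOn φ univ := fun t _ u _ h => by
    have : exp (t / 2) = exp (u / 2) := mul_left_cancel₀ hr.ne' h
    linarith [exp_injective this]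
  have hφ_range : φ '' univ = Ioi 0 := by
    refine Subset.antisymm (image_subset_iff.2 fun t _ => mul_pos hr (exp_pos _))
      fun x (hx : 0 < x) => ⟨2 * log (x / r), trivial, ?_⟩
    change r * exp (2 * log (x / r) / 2) = x
    rw [mul_div_cancel_left₀ _ two_ne_zero, exp_log (div_pos hx hr)]
    field_simp
  rw [← hφ_range, lintegral_image_eq_lintegral_abs_deriv_mul MeasurableSet.univ hφ_deriv hφ_inj,
    Measure.restrict_univ, ofReal_besselK_zero (by positivity)]
  refine lintegral_congr fun t => ?_
  have hφ_pos : 0 < φ t := by simp only [φ]; positivity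
  rw [← ENNReal.ofReal_mul (abs_nonneg _), abs_of_pos (half_pos hφ_pos), hφ_exponent]
  field_simp

lemma lintegral_exp_neg_mul_sq_add_div_sq_div_abs {a b : ℝ} (ha : 0 < a) (hb : 0 < b) :
    ∫⁻ x, ENNReal.ofReal (exp (-(a * x ^ 2 + b / x ^ 2)) / |x|) =
      ENNReal.ofReal (2 * besselK 0 (2 * √(a * b))) := by
  rw [lintegral_eq_two_mul_setLIntegral_Ioi fun x => by simp only [neg_sq, abs_neg],
    setLIntegral_congr_fun measurableSet_Ioi fun x (hx : 0 < x) => by rw [abs_of_pos hx],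
    setLIntegral_Ioi_exp_neg_mul_sq_add_div_sq_div ha hb, ENNReal.ofReal_mul zero_le_two,
    ENNReal.ofReal_ofNat]

lemma lintegral_comp_mul_left_of_ne_zero {x : ℝ} (hx : x ≠ 0) (F : ℝ → ℝ≥0∞) :
    ∫⁻ y, F (x * y) = ENNReal.ofReal |x⁻¹| * ∫⁻ w, F w := by
  rw [← (measurableEmbedding_mulLeft₀ hx).lintegral_map, Real.map_volume_mul_left hx,
    lintegral_smul_measure, smul_eq_mul]

lemma lintegral_mul_comp_fst_mul_snd {f : ℝ × ℝ → ℝ≥0∞} (hf : Measurable f) {g : ℝ → ℝ≥0∞}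
    (hg : Measurable g) :
    ∫⁻ p, f p * g (p.1 * p.2) = ∫⁻ z, (∫⁻ x, ENNReal.ofReal |x⁻¹| * f (x, z / x)) * g z := by
  have hF : Measurable fun p : ℝ × ℝ =>
      ENNReal.ofReal |p.1⁻¹| * f (p.1, p.2 / p.1) * g p.2 := by
    fun_prop
  calc ∫⁻ p, f p * g (p.1 * p.2)
      = ∫⁻ x, ∫⁻ y, f (x, y) * g (x * y) := by
        rw [Measure.volume_eq_prod, lintegral_prod _ (by fun_prop)]
    _ = ∫⁻ x, ∫⁻ z, ENNReal.ofReal |x⁻¹| * f (x, z / x) * g z := by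
        refine lintegral_congr_ae ((Measure.ae_ne volume 0).mono fun x hx => ?_)
        simp_rw [mul_assoc, lintegral_const_mul' _ _ ENNReal.ofReal_ne_top,
          ← lintegral_comp_mul_left_of_ne_zero hx fun z => f (x, z / x) * g z,
          mul_div_cancel_left₀ _ hx]
    _ = ∫⁻ z, (∫⁻ x, ENNReal.ofReal |x⁻¹| * f (x, z / x)) * g z := by
        rw [lintegral_lintegral_swap hF.aemeasurable]
        refine lintegral_congr fun z => ?_
        rw [lintegral_mul_const _ (by fun_prop)]

theorem map_fst_mul_snd_withDensity {f : ℝ × ℝ → ℝ≥0∞} (hf : Measurable f) :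
    (volume.withDensity f).map (fun p : ℝ × ℝ => p.1 * p.2) =
      volume.withDensity fun z => ∫⁻ x, ENNReal.ofReal |x⁻¹| * f (x, z / x) := by
  ext s hs
  have hm : Measurable fun p : ℝ × ℝ => p.1 * p.2 := by fun_prop
  calc (volume.withDensity f).map (fun p : ℝ × ℝ => p.1 * p.2) s
      = ∫⁻ p, f p * s.indicator 1 (p.1 * p.2) := by
        rw [Measure.map_apply hm hs, ← lintegral_indicator_one (hm hs),
          lintegral_withDensity_eq_lintegral_mul _ hf (measurable_one.indicator (hm hs))]
        rfl
    _ = ∫⁻ z, (∫⁻ x, ENNReal.ofReal |x⁻¹| * f (x, z / x)) * s.indicator 1 z :=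
        lintegral_mul_comp_fst_mul_snd hf (measurable_one.indicator hs)
    _ = _ := by
        rw [withDensity_apply _ hs, ← lintegral_indicator hs]
        refine lintegral_congr fun z => ?_
        by_cases hz : z ∈ s <;> simp [hz]

noncomputable def bivariateGaussianPDFReal (σ1 σ2 ρ : ℝ) (p : ℝ × ℝ) : ℝ :=
  (1 / (2 * π * σ1 * σ2 * √(1 - ρ ^ 2))) *
    exp (-(p.1 ^ 2 / σ1 ^ 2 - 2 * ρ * p.1 * p.2 / (σ1 * σ2) + p.2 ^ 2 / σ2 ^ 2) /
      (2 * (1 - ρ ^ 2)))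

/-- The `VG(0, 1 / (σ₁σ₂(1 - ρ²)), ρ / (σ₁σ₂(1 - ρ²)), 0)` density. -/
noncomputable def gaussianProductPDFReal (σ1 σ2 ρ z : ℝ) : ℝ :=
  (1 / (π * σ1 * σ2 * √(1 - ρ ^ 2))) * exp (ρ * z / (σ1 * σ2 * (1 - ρ ^ 2))) *
    besselK 0 (|z| / (σ1 * σ2 * (1 - ρ ^ 2)))

lemma bivariateGaussian_exponent_on_hyperbola {σ1 σ2 ρ x z : ℝ} (hσ1 : σ1 ≠ 0) (hσ2 : σ2 ≠ 0)
    (hρ : 1 - ρ ^ 2 ≠ 0) (hx : x ≠ 0) :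
    -(x ^ 2 / σ1 ^ 2 - 2 * ρ * x * (z / x) / (σ1 * σ2) + (z / x) ^ 2 / σ2 ^ 2) /
        (2 * (1 - ρ ^ 2)) =
      ρ * z / (σ1 * σ2 * (1 - ρ ^ 2)) -
        (1 / (2 * σ1 ^ 2 * (1 - ρ ^ 2)) * x ^ 2 +
          z ^ 2 / (2 * σ2 ^ 2 * (1 - ρ ^ 2)) / x ^ 2) := by
  field_simp
  ring

lemma lintegral_bivariateGaussianPDFReal_on_hyperbola {σ1 σ2 ρ z : ℝ} (hσ1 : 0 < σ1)
    (hσ2 : 0 < σ2) (hρ : |ρ| < 1) (hz : z ≠ 0) :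
    ∫⁻ x, ENNReal.ofReal |x⁻¹| *
        ENNReal.ofReal (bivariateGaussianPDFReal σ1 σ2 ρ (x, z / x)) =
      ENNReal.ofReal (gaussianProductPDFReal σ1 σ2 ρ z) := by
  have hτ : 0 < 1 - ρ ^ 2 := by nlinarith [sq_abs ρ, abs_nonneg ρ]
  simp only [bivariateGaussianPDFReal, gaussianProductPDFReal]
  set c := 1 / (2 * π * σ1 * σ2 * √(1 - ρ ^ 2)) with hc
  set a := 1 / (2 * σ1 ^ 2 * (1 - ρ ^ 2)) with ha
  set b := z ^ 2 / (2 * σ2 ^ 2 * (1 - ρ ^ 2)) with hb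
  have hab : a * b = (|z| / (2 * σ1 * σ2 * (1 - ρ ^ 2))) ^ 2 := by
    rw [ha, hb, div_pow, sq_abs]
    field_simp
  have hsqrt_ab : 2 * √(a * b) = |z| / (σ1 * σ2 * (1 - ρ ^ 2)) := by
    rw [hab, sqrt_sq (by positivity)]
    field_simp
  calc _ = ∫⁻ x, ENNReal.ofReal (c * exp (ρ * z / (σ1 * σ2 * (1 - ρ ^ 2)))) *
          ENNReal.ofReal (exp (-(a * x ^ 2 + b / x ^ 2)) / |x|) := by
        refine lintegral_congr_ae ((Measure.ae_ne volume 0).mono fun x hx => ?_)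
        dsimp only
        rw [← ENNReal.ofReal_mul (abs_nonneg _), ← ENNReal.ofReal_mul (by positivity),
          bivariateGaussian_exponent_on_hyperbola hσ1.ne' hσ2.ne' hτ.ne' hx, sub_eq_add_neg,
          exp_add, abs_inv, ha, hb]
        ring_nf
    _ = ENNReal.ofReal (c * exp (ρ * z / (σ1 * σ2 * (1 - ρ ^ 2)))) *
          ENNReal.ofReal (2 * besselK 0 (2 * √(a * b))) := by
        rw [lintegral_const_mul' _ _ ENNReal.ofReal_ne_top,
          lintegral_exp_neg_mul_sq_add_div_sq_div_abs (by positivity) (by positivity)]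
    _ = _ := by
        rw [← ENNReal.ofReal_mul (by positivity), hsqrt_ab, hc]
        congr 1
        field_simp

theorem product_correlated_gaussian_density_general {Ω : Type*} [MeasurableSpace Ω]
    (μ : Measure Ω)
    (σ1 σ2 ρ : ℝ) (h1 : 0 < σ1) (h2 : 0 < σ2) (hρ : |ρ| < 1)
    (X Y : Ω → ℝ) (hmX : Measurable X) (hmY : Measurable Y)
    (hjoint : Measure.map (fun ω => (X ω, Y ω)) μ =
      (volume : Measure (ℝ × ℝ)).withDensity (fun p => ENNReal.ofReal
        ((1 / (2 * π * σ1 * σ2 * Real.sqrt (1 - ρ^2))) *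
          Real.exp (-(p.1^2/σ1^2 - 2*ρ*p.1*p.2/(σ1*σ2) + p.2^2/σ2^2) / (2*(1 - ρ^2)))))) :
    Measure.map (fun ω => X ω * Y ω) μ =
      volume.withDensity (fun z => ENNReal.ofReal
        ((1 / (π * σ1 * σ2 * Real.sqrt (1 - ρ^2))) *
          Real.exp (ρ * z / (σ1 * σ2 * (1 - ρ^2))) *
          besselK 0 (|z| / (σ1 * σ2 * (1 - ρ^2))))) := by
  have hm : Measurable fun p : ℝ × ℝ => p.1 * p.2 := by fun_prop
  rw [show (fun ω => X ω * Y ω) = (fun p : ℝ × ℝ => p.1 * p.2) ∘ fun ω => (X ω, Y ω) from rfl,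
    ← Measure.map_map hm (hmX.prodMk hmY), hjoint, map_fst_mul_snd_withDensity (by fun_prop)]
  exact withDensity_congr_ae ((Measure.ae_ne volume 0).mono fun z hz =>
    lintegral_bivariateGaussianPDFReal_on_hyperbola h1 h2 hρ hz)

/-- If `(X, Y)` is bivariate normal with mean zero, variances `σ₁², σ₂²` and
correlation `ρ ∈ (−1, 1)` (given via the joint density), then `Z = XY` has density
`f_Z(z) = (1/(π σ₁ σ₂ √(1−ρ²))) exp(ρz/(σ₁σ₂(1−ρ²))) K₀(|z|/(σ₁σ₂(1−ρ²)))`,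
i.e. `XY ~ VG(0, 1/(σ₁σ₂(1−ρ²)), ρ/(σ₁σ₂(1−ρ²)), 0)`. -/
theorem product_correlated_gaussian_density {Ω : Type*} [MeasurableSpace Ω]
    (μ : Measure Ω) [IsProbabilityMeasure μ]
    (σ1 σ2 ρ : ℝ) (h1 : 0 < σ1) (h2 : 0 < σ2) (hρ : |ρ| < 1)
    (X Y : Ω → ℝ) (hmX : Measurable X) (hmY : Measurable Y)
    (hjoint : Measure.map (fun ω => (X ω, Y ω)) μ =
      (volume : Measure (ℝ × ℝ)).withDensity (fun p => ENNReal.ofReal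
        ((1 / (2 * π * σ1 * σ2 * Real.sqrt (1 - ρ^2))) *
          Real.exp (-(p.1^2/σ1^2 - 2*ρ*p.1*p.2/(σ1*σ2) + p.2^2/σ2^2) / (2*(1 - ρ^2)))))) :
    Measure.map (fun ω => X ω * Y ω) μ =
      volume.withDensity (fun z => ENNReal.ofReal
        ((1 / (π * σ1 * σ2 * Real.sqrt (1 - ρ^2))) *
          Real.exp (ρ * z / (σ1 * σ2 * (1 - ρ^2))) *
          besselK 0 (|z| / (σ1 * σ2 * (1 - ρ^2))))) :=
  product_correlated_gaussian_density_general μ σ1 σ2 ρ h1 h2 hρ X Y hmX hmY hjoint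
end

section
/- For m > |ν| (real parameters) and α > 0, ∫₀^∞ x^{m−1} K_ν(αx) dx = (2^{m−2}/α^m) · Γ((m−ν)/2) · Γ((m+ν)/2). -/
open MeasureTheory Real

/-!
Expanding `K_ν(αx)` by its defining integral and exchanging the two integrations, the
`x`-integral is a Gamma integral, which leaves `Γ(m) α^{-m} ∫₀^∞ cosh(t)^{-m} cosh(νt) dt`.
By evenness this is half of `∫_ℝ e^{νt} cosh(t)^{-m} dt`. With `σ` the logistic sigmoid,
`e^{(a-b)t} (2 cosh t)^{-(a+b)} = σ(2t)^a σ(-2t)^b`, and since `σ' = σ(1 - σ)` the substitution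
`u = σ(2t)`, a bijection `ℝ ≃ (0, 1)`, turns the full-line integral into the Beta integral
`½ B(a, b)` with `a, b = (m ± ν)/2`.
-/

open Set

lemma integrableOn_rpow_mul_exp_neg_mul {a r : ℝ} (ha : 0 < a) (hr : 0 < r) :
    IntegrableOn (fun x : ℝ => x ^ (a - 1) * exp (-(r * x))) (Ioi 0) := by
  simpa [neg_mul] using integrableOn_rpow_mul_exp_neg_mul_rpow (p := 1) (by linarith) one_pos hr

lemma integral_rpow_mul_integral_exp_neg_mul {β : Type*} [MeasurableSpace β] {μ : Measure β}
    [SFinite μ] {m : ℝ} (hm : 0 < m) {c w : β → ℝ} (hc : Measurable c) (hw : Measurable w)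
    (hc_pos : ∀ t, 0 < c t) (hint : Integrable (fun t => c t ^ (-m) * w t) μ) :
    ∫ x in Ioi 0, x ^ (m - 1) * ∫ t, exp (-(c t * x)) * w t ∂μ
      = Gamma m * ∫ t, c t ^ (-m) * w t ∂μ := by
  set F : ℝ → β → ℝ := fun x t => x ^ (m - 1) * exp (-(c t * x)) * w t
  have hmellin : ∀ t, ∫ x in Ioi 0, x ^ (m - 1) * exp (-(c t * x)) = c t ^ (-m) * Gamma m :=
    fun t => by
      rw [integral_rpow_mul_exp_neg_mul_Ioi hm (hc_pos t), one_div, inv_rpow (hc_pos t).le,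
        rpow_neg (hc_pos t).le]
  have hnorm : ∀ t, ∫ x in Ioi 0, ‖F x t‖ = Gamma m * ‖c t ^ (-m) * w t‖ := fun t => by
    have hF : ∀ x ∈ Ioi (0 : ℝ), ‖F x t‖ = x ^ (m - 1) * exp (-(c t * x)) * ‖w t‖ :=
      fun x (hx : 0 < x) => by rw [norm_mul, Real.norm_of_nonneg (by positivity)]
    rw [setIntegral_congr_fun measurableSet_Ioi hF, integral_mul_const, hmellin, norm_mul,
      Real.norm_of_nonneg (rpow_nonneg (hc_pos t).le _)]
    ring
  have hF_int : Integrable (Function.uncurry F) ((volume.restrict (Ioi 0)).prod μ) := by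
    refine (integrable_prod_iff' ?_).2 ⟨Filter.Eventually.of_forall fun t => ?_, ?_⟩
    · exact (by fun_prop : Measurable (Function.uncurry F)).aestronglyMeasurable
    · exact (integrableOn_rpow_mul_exp_neg_mul hm (hc_pos t)).mul_const (w t)
    · exact (hint.norm.const_mul (Gamma m)).congr
        (Filter.Eventually.of_forall fun t => (hnorm t).symm)
  calc ∫ x in Ioi 0, x ^ (m - 1) * ∫ t, exp (-(c t * x)) * w t ∂μ
      = ∫ x in Ioi 0, ∫ t, F x t ∂μ := by
        simp only [F, mul_assoc, integral_const_mul]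
    _ = ∫ t, (∫ x in Ioi 0, F x t) ∂μ := integral_integral_swap hF_int
    _ = ∫ t, Gamma m * (c t ^ (-m) * w t) ∂μ := by
        congr 1 with t
        rw [integral_mul_const, hmellin]
        ring
    _ = Gamma m * ∫ t, c t ^ (-m) * w t ∂μ := integral_const_mul _ _

lemma ofReal_rpow_mul_one_sub_rpow {u : ℝ} (hu₀ : 0 ≤ u) (hu₁ : u ≤ 1) (a b : ℝ) :
    ((u ^ (a - 1) * (1 - u) ^ (b - 1) : ℝ) : ℂ)
      = (u : ℂ) ^ ((a : ℂ) - 1) * (1 - (u : ℂ)) ^ ((b : ℂ) - 1) := by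
  rw [Complex.ofReal_mul, Complex.ofReal_cpow hu₀, Complex.ofReal_cpow (sub_nonneg.2 hu₁)]
  push_cast
  rfl

lemma integrableOn_rpow_mul_one_sub_rpow {a b : ℝ} (ha : 0 < a) (hb : 0 < b) :
    IntegrableOn (fun u : ℝ => u ^ (a - 1) * (1 - u) ^ (b - 1)) (Ioo 0 1) := by
  have h := (intervalIntegrable_iff_integrableOn_Ioo_of_le zero_le_one).1 <|
    Complex.betaIntegral_convergent (u := a) (v := b) (by simpa) (by simpa)
  rw [← integrableOn_congr_fun (fun u hu => ofReal_rpow_mul_one_sub_rpow hu.1.le hu.2.le a b)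
    measurableSet_Ioo] at h
  simpa [IntegrableOn] using h.re

lemma integral_rpow_mul_one_sub_rpow {a b : ℝ} (ha : 0 < a) (hb : 0 < b) :
    ∫ u in Ioo 0 1, u ^ (a - 1) * (1 - u) ^ (b - 1) = Gamma a * Gamma b / Gamma (a + b) := by
  apply Complex.ofReal_injective
  rw [← integral_complex_ofReal, setIntegral_congr_fun measurableSet_Ioo
    (fun u hu => ofReal_rpow_mul_one_sub_rpow hu.1.le hu.2.le a b)]
  push_cast
  rw [← Complex.Gamma_ofReal, ← Complex.Gamma_ofReal, ← Complex.Gamma_ofReal,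
    Complex.ofReal_add, ← Complex.betaIntegral_eq_Gamma_mul_div _ _ (by simpa) (by simpa),
    Complex.betaIntegral,
    intervalIntegral.integral_of_le zero_le_one, integral_Ioc_eq_integral_Ioo]

section ChangeOfVariables

variable {E : Type*} [NormedAddCommGroup E] [NormedSpace ℝ E]

lemma integrableOn_Ioo_zero_one_iff_integrable_comp_sigmoid (g : ℝ → E) :
    IntegrableOn g (Ioo 0 1)
      ↔ Integrable (fun s => |sigmoid s * (1 - sigmoid s)| • g (sigmoid s)) := by
  simpa [range_sigmoid] using integrableOn_image_iff_integrableOn_abs_deriv_smul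
    MeasurableSet.univ (fun s _ => (hasDerivAt_sigmoid s).hasDerivWithinAt)
    sigmoid_injective.injOn g

lemma integral_Ioo_zero_one_eq_integral_comp_sigmoid (g : ℝ → E) :
    ∫ u in Ioo 0 1, g u = ∫ s, |sigmoid s * (1 - sigmoid s)| • g (sigmoid s) := by
  simpa [range_sigmoid] using integral_image_eq_integral_abs_deriv_smul MeasurableSet.univ
    (fun s _ => (hasDerivAt_sigmoid s).hasDerivWithinAt) sigmoid_injective.injOn g

lemma integral_Ioi_zero_add_comp_neg {f : ℝ → E} (hf : Integrable f) :
    ∫ t in Ioi 0, (f t + f (-t)) = ∫ t, f t := by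
  rw [integral_add hf.integrableOn hf.comp_neg.integrableOn, integral_comp_neg_Ioi, neg_zero,
    add_comm, intervalIntegral.integral_Iic_add_Ioi hf.integrableOn hf.integrableOn]

end ChangeOfVariables

lemma abs_deriv_sigmoid_smul_rpow_mul_one_sub_rpow (a b s : ℝ) :
    |sigmoid s * (1 - sigmoid s)| • (sigmoid s ^ (a - 1) * (1 - sigmoid s) ^ (b - 1))
      = sigmoid s ^ a * sigmoid (-s) ^ b := by
  have h₀ := sigmoid_pos s
  have h₁ := sigmoid_pos (-s)
  rw [smul_eq_mul, ← sigmoid_neg, abs_of_pos (mul_pos h₀ h₁), rpow_sub_one h₀.ne',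
    rpow_sub_one h₁.ne']
  field_simp

lemma integrable_sigmoid_rpow_mul_sigmoid_neg_rpow {a b : ℝ} (ha : 0 < a) (hb : 0 < b) :
    Integrable (fun s => sigmoid s ^ a * sigmoid (-s) ^ b) := by
  simpa only [abs_deriv_sigmoid_smul_rpow_mul_one_sub_rpow] using
    (integrableOn_Ioo_zero_one_iff_integrable_comp_sigmoid _).1
      (integrableOn_rpow_mul_one_sub_rpow ha hb)

lemma integral_sigmoid_rpow_mul_sigmoid_neg_rpow {a b : ℝ} (ha : 0 < a) (hb : 0 < b) :
    ∫ s, sigmoid s ^ a * sigmoid (-s) ^ b = Gamma a * Gamma b / Gamma (a + b) := by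
  simpa only [abs_deriv_sigmoid_smul_rpow_mul_one_sub_rpow] using
    (integral_Ioo_zero_one_eq_integral_comp_sigmoid _).symm.trans
      (integral_rpow_mul_one_sub_rpow ha hb)

lemma integrable_sigmoid_two_mul_rpow_mul_sigmoid_neg_two_mul_rpow {a b : ℝ} (ha : 0 < a)
    (hb : 0 < b) :
    Integrable (fun t => sigmoid (2 * t) ^ a * sigmoid (-(2 * t)) ^ b) :=
  (integrable_comp_mul_left_iff (fun s => sigmoid s ^ a * sigmoid (-s) ^ b) two_ne_zero).2
    (integrable_sigmoid_rpow_mul_sigmoid_neg_rpow ha hb)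

lemma sigmoid_two_mul (t : ℝ) : sigmoid (2 * t) = exp t / (2 * cosh t) := by
  rw [sigmoid_def, cosh_eq]
  field_simp
  rw [add_mul, ← exp_add]
  ring_nf

lemma sigmoid_two_mul_rpow_mul_sigmoid_neg_two_mul_rpow (a b t : ℝ) :
    sigmoid (2 * t) ^ a * sigmoid (-(2 * t)) ^ b
      = exp ((a - b) * t) * (2 * cosh t) ^ (-(a + b)) := by
  have hc : 0 < 2 * cosh t := by positivity
  rw [← mul_neg, sigmoid_two_mul, sigmoid_two_mul, cosh_neg, div_rpow (exp_pos _).le hc.le,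
    div_rpow (exp_pos _).le hc.le, ← exp_mul, ← exp_mul, rpow_neg hc.le, rpow_add hc,
    show (a - b) * t = t * a + -t * b by ring, exp_add]
  field_simp

lemma cosh_rpow_neg_mul_cosh_eq (m ν t : ℝ) :
    cosh t ^ (-m) * cosh (ν * t) = 2 ^ (m - 1) *
      (sigmoid (2 * t) ^ ((m + ν) / 2) * sigmoid (-(2 * t)) ^ ((m - ν) / 2)
        + sigmoid (2 * -t) ^ ((m + ν) / 2) * sigmoid (-(2 * -t)) ^ ((m - ν) / 2)) := by
  simp only [sigmoid_two_mul_rpow_mul_sigmoid_neg_two_mul_rpow, cosh_neg]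
  rw [show (m + ν) / 2 - (m - ν) / 2 = ν by ring, show (m + ν) / 2 + (m - ν) / 2 = m by ring,
    mul_rpow zero_le_two (cosh_pos t).le, cosh_eq (ν * t), rpow_neg zero_le_two,
    rpow_sub_one two_ne_zero]
  field_simp

section CoshIntegral

variable {m ν : ℝ}

lemma integrableOn_cosh_rpow_neg_mul_cosh (h : |ν| < m) :
    IntegrableOn (fun t => cosh t ^ (-m) * cosh (ν * t)) (Ioi 0) := by
  obtain ⟨hν₁, hν₂⟩ := abs_lt.1 h
  have hf := integrable_sigmoid_two_mul_rpow_mul_sigmoid_neg_two_mul_rpow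
    (a := (m + ν) / 2) (b := (m - ν) / 2) (by linarith) (by linarith)
  simpa only [cosh_rpow_neg_mul_cosh_eq, Pi.add_apply] using
    ((hf.add hf.comp_neg).const_mul _).integrableOn

lemma integral_cosh_rpow_neg_mul_cosh (h : |ν| < m) :
    ∫ t in Ioi 0, cosh t ^ (-m) * cosh (ν * t)
      = 2 ^ (m - 2) * Gamma ((m - ν) / 2) * Gamma ((m + ν) / 2) / Gamma m := by
  obtain ⟨hν₁, hν₂⟩ := abs_lt.1 h
  have ha : 0 < (m + ν) / 2 := by linarith
  have hb : 0 < (m - ν) / 2 := by linarith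
  simp only [cosh_rpow_neg_mul_cosh_eq]
  rw [integral_const_mul, integral_Ioi_zero_add_comp_neg
      (integrable_sigmoid_two_mul_rpow_mul_sigmoid_neg_two_mul_rpow ha hb),
    Measure.integral_comp_mul_left (fun s => sigmoid s ^ _ * sigmoid (-s) ^ _),
    integral_sigmoid_rpow_mul_sigmoid_neg_rpow ha hb, show (m + ν) / 2 + (m - ν) / 2 = m by ring,
    rpow_sub two_pos, rpow_sub two_pos, abs_of_pos (by norm_num : (0 : ℝ) < 2⁻¹), smul_eq_mul]
  ring

end CoshIntegral

/-- Mellin transform of the Bessel-K function: for real `m > |ν|` and `α > 0`,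
`∫₀^∞ x^{m−1} K_ν(αx) dx = (2^{m−2}/α^m) Γ((m−ν)/2) Γ((m+ν)/2)`. -/
theorem mellin_besselK (m ν α : ℝ) (h : |ν| < m) (hα : 0 < α) :
    ∫ x in Set.Ioi (0 : ℝ), x ^ (m-1) * besselK ν (α*x)
      = (2:ℝ) ^ (m-2) / α ^ m * Real.Gamma ((m-ν)/2) * Real.Gamma ((m+ν)/2) := by
  have hm : 0 < m := (abs_nonneg ν).trans_lt h
  have hK : ∀ x, besselK ν (α * x) = ∫ t in Ioi 0, exp (-(α * cosh t * x)) * cosh (ν * t) :=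
    fun x => by
      simp only [besselK]
      ring_nf
  have hscale : (fun t => (α * cosh t) ^ (-m) * cosh (ν * t))
      = fun t => α ^ (-m) * (cosh t ^ (-m) * cosh (ν * t)) := by
    ext t
    rw [mul_rpow hα.le (cosh_pos t).le, mul_assoc]
  simp only [hK]
  rw [integral_rpow_mul_integral_exp_neg_mul hm (by fun_prop) (by fun_prop)
      (fun t => mul_pos hα (cosh_pos t))
      (by rw [hscale]; exact (integrableOn_cosh_rpow_neg_mul_cosh h).const_mul _),
    hscale, integral_const_mul, integral_cosh_rpow_neg_mul_cosh h, rpow_neg hα.le]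
  field_simp [(Gamma_pos_of_pos hm).ne']
end

section
/- Let X₁, X₂ be independent random variables, each with density f_i(x) = (α_i/2) e^{−α_i |x|} (Laplace distributions). Then for z ≠ 0 the density of Z = X₁X₂ is f_Z(z) = (α₁α₂/2)·G^{2,0}_{0,2}(α₁α₂|z| | −; 0,0) = α₁α₂ K₀(2√(α₁α₂|z|)). -/
open MeasureTheory ProbabilityTheory Real

open Set
open scoped ENNReal

lemma lint_image {s : Set ℝ} {f f' : ℝ → ℝ}
    (hs : MeasurableSet s) (hf' : ∀ x ∈ s, HasDerivWithinAt f (f' x) s x)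
    (hf : Set.InjOn f s) (g : ℝ → ℝ≥0∞) :
    ∫⁻ x in f '' s, g x = ∫⁻ x in s, ENNReal.ofReal |f' x| * g (f x) := by
  simpa only [ContinuousLinearMap.det_toSpanSingleton] using
    lintegral_image_eq_lintegral_abs_det_fderiv_mul volume hs
      (fun x hx => (hf' x hx).hasFDerivWithinAt) hf g

lemma lint_even (h : ℝ → ℝ≥0∞) (heven : ∀ x, h (-x) = h x) :
    ∫⁻ x in Set.Iio (0:ℝ), h x = ∫⁻ x in Set.Ioi (0:ℝ), h x := by
  have himg : Neg.neg '' Set.Ioi (0:ℝ) = Set.Iio 0 := by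
    rw [Set.image_neg_eq_neg, Set.neg_Ioi, neg_zero]
  rw [← himg, lint_image (f' := fun _ => (-1:ℝ)) measurableSet_Ioi
    (fun x _ => (hasDerivAt_neg x).hasDerivWithinAt)
    (fun x _ y _ hxy => neg_injective hxy) h]
  simp [heven]

lemma cosh_ge (t : ℝ) (_ht : 0 ≤ t) : t / 2 ≤ Real.cosh t := by
  rw [Real.cosh_eq]
  have h1 : t + 1 ≤ Real.exp t := Real.add_one_le_exp t
  have h2 : (0:ℝ) < Real.exp (-t) := Real.exp_pos _
  nlinarith

lemma integrable_exp_cosh {b : ℝ} (hb : 0 < b) :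
    IntegrableOn (fun t => Real.exp (-b * Real.cosh t)) (Set.Ioi (0:ℝ)) := by
  apply Integrable.mono' (g := fun t => Real.exp (-(b/2) * t))
  · exact exp_neg_integrableOn_Ioi 0 (by positivity)
  · exact (Real.continuous_exp.comp ((continuous_const.mul Real.continuous_cosh))).aestronglyMeasurable
  · filter_upwards [self_mem_ae_restrict measurableSet_Ioi] with t ht
    rw [Real.norm_eq_abs, abs_of_pos (Real.exp_pos _)]
    apply Real.exp_le_exp.2
    have := cosh_ge t (le_of_lt ht)
    nlinarith

lemma besselK_zero_eq (b : ℝ) :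
    besselK 0 b = ∫ t in Set.Ioi (0:ℝ), Real.exp (-b * Real.cosh t) := by
  unfold besselK
  simp

lemma besselK_zero_nonneg (b : ℝ) : 0 ≤ besselK 0 b := by
  rw [besselK_zero_eq]
  apply setIntegral_nonneg measurableSet_Ioi
  intro t _; positivity

lemma lint_ofReal_exp_cosh {b : ℝ} (hb : 0 < b) :
    ∫⁻ t in Set.Ioi (0:ℝ), ENNReal.ofReal (Real.exp (-b * Real.cosh t)) =
      ENNReal.ofReal (besselK 0 b) := by
  rw [besselK_zero_eq,
    ← ofReal_integral_eq_lintegral_ofReal (integrable_exp_cosh hb)]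
  filter_upwards with t using le_of_lt (Real.exp_pos _)

lemma key_lint {a c : ℝ} (ha : 0 < a) (hc : 0 < c) :
    ∫⁻ x in Set.Ioi (0:ℝ), ENNReal.ofReal (x⁻¹ * Real.exp (-(a*x + c/x))) =
      2 * ENNReal.ofReal (besselK 0 (2 * Real.sqrt (a*c))) := by
  set s : ℝ := Real.sqrt (c/a) with hs_def
  have hs : 0 < s := Real.sqrt_pos.2 (by positivity)
  set b : ℝ := 2 * Real.sqrt (a*c) with hb_def
  have hb : 0 < b := by
    have : 0 < Real.sqrt (a*c) := Real.sqrt_pos.2 (by positivity)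
    positivity
  have has : a * s = Real.sqrt (a*c) := by
    rw [hs_def, ← Real.sqrt_sq ha.le, ← Real.sqrt_mul (by positivity)]
    congr 1; field_simp; rw [Real.sq_sqrt (by positivity)]
  have hcs : c / s = Real.sqrt (a*c) := by
    rw [div_eq_iff hs.ne', hs_def, ← Real.sqrt_mul (by positivity)]
    rw [show a*c*(c/a) = c^2 by field_simp, Real.sqrt_sq hc.le]
  have himg : (fun t => s * Real.exp t) '' Set.univ = Set.Ioi 0 := by
    rw [Set.image_univ]
    ext y; simp only [Set.mem_range, Set.mem_Ioi]
    constructor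
    · rintro ⟨t, rfl⟩; positivity
    · intro hy; exact ⟨Real.log (y / s), by
        rw [Real.exp_log (by positivity)]; field_simp⟩
  rw [← himg, lint_image (f' := fun t => s * Real.exp t) MeasurableSet.univ
    (fun t _ => ((Real.hasDerivAt_exp t).const_mul s).hasDerivWithinAt)
    (fun x _ y _ hxy => by
      have := mul_left_cancel₀ hs.ne' hxy
      exact Real.exp_injective this)]
  have hcongr : ∀ t : ℝ, ENNReal.ofReal |s * Real.exp t| *
      ENNReal.ofReal ((s * Real.exp t)⁻¹ * Real.exp (-(a*(s*Real.exp t) + c/(s*Real.exp t)))) =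
      ENNReal.ofReal (Real.exp (-b * Real.cosh t)) := by
    intro t
    have hse : 0 < s * Real.exp t := by positivity
    rw [abs_of_pos hse, ← ENNReal.ofReal_mul hse.le, ← mul_assoc,
      mul_inv_cancel₀ hse.ne', one_mul]
    congr 1
    congr 1
    have : a * (s * Real.exp t) + c / (s * Real.exp t) = b * Real.cosh t := by
      rw [Real.cosh_eq]
      have h1 : a * (s * Real.exp t) = Real.sqrt (a*c) * Real.exp t := by
        rw [← has]; ring
      have h2 : c / (s * Real.exp t) = Real.sqrt (a*c) * Real.exp (-t) := by
        rw [Real.exp_neg, div_mul_eq_div_div, hcs]; ring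
      rw [h1, h2, hb_def]; ring
    rw [this]; ring
  rw [lintegral_congr (fun t => hcongr t), Measure.restrict_univ, ← setLIntegral_univ,
    ← setLIntegral_congr (f := fun t => ENNReal.ofReal (Real.exp (-b * Real.cosh t)))
      ((ae_eq_univ (μ := volume) (s := Set.Iio (0:ℝ) ∪ Set.Ioi 0)).2 (by
        rw [show (Set.Iio (0:ℝ) ∪ Set.Ioi 0)ᶜ = {0} by
          ext x; simp [eq_comm, le_antisymm_iff]]
        exact Real.volume_singleton)),
    lintegral_union measurableSet_Ioi ((Set.Iio_disjoint_Ici le_rfl).mono_right Set.Ioi_subset_Ici_self),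
    lint_even _ (fun x => by rw [Real.cosh_neg]),
    lint_ofReal_exp_cosh hb, two_mul]

lemma map_mul_prod (g1 g2 : ℝ → ℝ≥0∞) (hg1 : Measurable g1) (hg2 : Measurable g2)
    (h1t : ∀ x, g1 x ≠ ⊤) (h2t : ∀ y, g2 y ≠ ⊤) :
    Measure.map (fun p : ℝ × ℝ => p.1 * p.2)
      ((volume.withDensity g1).prod (volume.withDensity g2)) =
    volume.withDensity
      (fun z => ∫⁻ x, g1 x * (ENNReal.ofReal |x|⁻¹ * g2 (z/x))) := by
  have hsf1 : SigmaFinite (volume.withDensity g1) :=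
    SigmaFinite.withDensity_of_ne_top' h1t
  have hsf2 : SigmaFinite (volume.withDensity g2) :=
    SigmaFinite.withDensity_of_ne_top' h2t
  have hprod : (volume.withDensity g1).prod (volume.withDensity g2) =
      (volume.prod volume).withDensity (fun p => g1 p.1 * g2 p.2) :=
    Measure.prod_eq fun s t hs ht => by
      rw [withDensity_apply _ (hs.prod ht), ← Measure.prod_restrict,
        lintegral_prod_mul hg1.aemeasurable hg2.aemeasurable,
        withDensity_apply _ hs, withDensity_apply _ ht]
  rw [hprod]
  ext s hs
  set ind : ℝ → ℝ≥0∞ := s.indicator 1 with hind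
  have hind_meas : Measurable ind := measurable_one.indicator hs
  have hind_ne_top : ∀ z, ind z ≠ ⊤ := by
    intro z
    rw [hind]
    by_cases h : z ∈ s <;> simp [Set.indicator_apply, h]
  rw [Measure.map_apply measurable_mul hs,
    withDensity_apply _ (measurable_mul hs),
    ← lintegral_indicator (measurable_mul hs)]
  have hkey : ∀ p : ℝ × ℝ, ((fun p : ℝ × ℝ => p.1 * p.2) ⁻¹' s).indicator
      (fun p => g1 p.1 * g2 p.2) p = g1 p.1 * (g2 p.2 * ind (p.1 * p.2)) := by
    intro p
    by_cases h : p ∈ (fun p : ℝ × ℝ => p.1 * p.2) ⁻¹' s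
    · have : p.1 * p.2 ∈ s := h
      simp [Set.indicator_of_mem h, hind, Set.indicator_of_mem this, mul_assoc]
    · have : p.1 * p.2 ∉ s := h
      simp [Set.indicator_of_notMem h, hind, Set.indicator_of_notMem this]
  rw [lintegral_congr hkey]
  have hmeas_int : Measurable (fun p : ℝ × ℝ => g1 p.1 * (g2 p.2 * ind (p.1 * p.2))) :=
    (hg1.comp measurable_fst).mul ((hg2.comp measurable_snd).mul
      (hind_meas.comp measurable_mul))
  rw [lintegral_prod _ hmeas_int.aemeasurable]
  have hx_ae : ∀ᵐ x : ℝ, (x : ℝ) ≠ 0 := by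
    rw [ae_iff]
    simp only [ne_eq, not_not]
    simpa using Real.volume_singleton
  have hstep : ∀ x : ℝ, x ≠ 0 → ∫⁻ y, g1 x * (g2 y * ind (x * y)) =
      ∫⁻ z, g1 x * (ENNReal.ofReal |x|⁻¹ * (g2 (z/x) * ind z)) := by
    intro x hx
    set H : ℝ → ℝ≥0∞ := fun z => g2 (z/x) * ind z with hH
    have hHmeas : Measurable H := (hg2.comp (measurable_id.div_const x)).mul hind_meas
    have h1 : ∀ y : ℝ, g2 y * ind (x * y) = H (x * y) := by
      intro y
      rw [hH]
      simp only [mul_div_cancel_left₀ _ hx]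
    calc ∫⁻ y, g1 x * (g2 y * ind (x * y))
        = g1 x * ∫⁻ y, H (x * y) := by
          rw [lintegral_const_mul' _ _ (h1t x)]
          congr 1
          exact lintegral_congr fun y => by rw [h1 y]
      _ = g1 x * ∫⁻ z, H z ∂(Measure.map (fun y => x * y) volume) := by
          rw [lintegral_map hHmeas (measurable_const_mul x)]
      _ = g1 x * (ENNReal.ofReal |x|⁻¹ * ∫⁻ z, H z) := by
          rw [Real.map_volume_mul_left hx, lintegral_smul_measure, smul_eq_mul, abs_inv]
      _ = ∫⁻ z, g1 x * (ENNReal.ofReal |x|⁻¹ * (g2 (z/x) * ind z)) := by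
          rw [lintegral_const_mul' _ _ (h1t x),
            lintegral_const_mul' _ _ ENNReal.ofReal_ne_top]
  rw [lintegral_congr_ae (hx_ae.mono fun x hx => hstep x hx)]
  rw [lintegral_lintegral_swap (by
    apply Measurable.aemeasurable
    exact (hg1.comp measurable_fst).mul
      (((ENNReal.measurable_ofReal.comp ((measurable_fst.abs).inv))).mul
        ((hg2.comp (measurable_snd.div measurable_fst)).mul
          (hind_meas.comp measurable_snd))))]
  rw [withDensity_apply _ hs, ← lintegral_indicator hs]
  apply lintegral_congr
  intro z
  calc ∫⁻ x, g1 x * (ENNReal.ofReal |x|⁻¹ * (g2 (z/x) * ind z))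
      = ∫⁻ x, ind z * (g1 x * (ENNReal.ofReal |x|⁻¹ * g2 (z/x))) := by
        apply lintegral_congr
        intro x
        ring
    _ = ind z * ∫⁻ x, g1 x * (ENNReal.ofReal |x|⁻¹ * g2 (z/x)) :=
        lintegral_const_mul' _ _ (hind_ne_top z)
    _ = s.indicator (fun z => ∫⁻ x, g1 x * (ENNReal.ofReal |x|⁻¹ * g2 (z/x))) z := by
        rw [hind]
        by_cases h : z ∈ s
        · simp [Set.indicator_of_mem h]
        · simp [Set.indicator_of_notMem h]

lemma density_eq {α1 α2 : ℝ} (h1 : 0 < α1) (h2 : 0 < α2) {z : ℝ} (hz : z ≠ 0) :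
    ∫⁻ x : ℝ, ENNReal.ofReal ((α1/2) * Real.exp (-α1 * |x|)) *
      (ENNReal.ofReal |x|⁻¹ * ENNReal.ofReal ((α2/2) * Real.exp (-α2 * |z/x|))) =
    ENNReal.ofReal (α1 * α2 * besselK 0 (2 * Real.sqrt (α1 * α2 * |z|))) := by
  set G : ℝ → ℝ := fun x => (α1/2) * Real.exp (-α1 * |x|) *
      (|x|⁻¹ * ((α2/2) * Real.exp (-α2 * |z/x|))) with hG
  have hcomb : ∀ x : ℝ, ENNReal.ofReal ((α1/2) * Real.exp (-α1 * |x|)) *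
      (ENNReal.ofReal |x|⁻¹ * ENNReal.ofReal ((α2/2) * Real.exp (-α2 * |z/x|))) =
      ENNReal.ofReal (G x) := by
    intro x
    rw [hG, ← ENNReal.ofReal_mul (by positivity), ← ENNReal.ofReal_mul (by positivity)]
  rw [lintegral_congr hcomb]
  have hsplit : ∫⁻ x : ℝ, ENNReal.ofReal (G x) =
      2 * ∫⁻ x in Set.Ioi (0:ℝ), ENNReal.ofReal (G x) := by
    rw [← setLIntegral_univ,
      ← setLIntegral_congr ((ae_eq_univ (μ := volume) (s := Set.Iio (0:ℝ) ∪ Set.Ioi 0)).2 (by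
        rw [show (Set.Iio (0:ℝ) ∪ Set.Ioi 0)ᶜ = {0} by
          ext x; simp [eq_comm, le_antisymm_iff]]
        exact Real.volume_singleton)),
      lintegral_union measurableSet_Ioi
        ((Set.Iio_disjoint_Ici le_rfl).mono_right Set.Ioi_subset_Ici_self),
      lint_even _ (fun x => by simp [hG, div_neg, abs_neg]), two_mul]
  rw [hsplit]
  have hGpos : ∀ x ∈ Set.Ioi (0:ℝ), G x =
      (α1*α2/4) * (x⁻¹ * Real.exp (-(α1*x + (α2*|z|)/x))) := by
    intro x hx
    have hx0 : 0 < x := hx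
    simp only [hG]
    have h3 : |z/x| = |z|/x := by rw [abs_div, abs_of_pos hx0]
    rw [abs_of_pos hx0, h3]
    rw [show -(α1*x + (α2*|z|)/x) = (-α1*x) + (-α2 * (|z|/x)) by field_simp; ring,
      Real.exp_add]
    ring
  rw [setLIntegral_congr_fun measurableSet_Ioi
    (fun x hx => by rw [hGpos x hx])]
  have hconst : ∀ x : ℝ, ENNReal.ofReal ((α1*α2/4) * (x⁻¹ * Real.exp (-(α1*x + (α2*|z|)/x)))) =
      ENNReal.ofReal (α1*α2/4) * ENNReal.ofReal (x⁻¹ * Real.exp (-(α1*x + (α2*|z|)/x))) := by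
    intro x
    rw [← ENNReal.ofReal_mul (by positivity)]
  rw [lintegral_congr (fun x => hconst x), lintegral_const_mul' _ _ ENNReal.ofReal_ne_top,
    key_lint h1 (by positivity : 0 < α2 * |z|), show α1 * (α2 * |z|) = α1*α2*|z| by ring]
  rw [show (2:ℝ≥0∞) = ENNReal.ofReal 2 by simp,
    ← ENNReal.ofReal_mul (by norm_num : (0:ℝ) ≤ 2),
    ← ENNReal.ofReal_mul (by positivity : (0:ℝ) ≤ α1*α2/4),
    ← ENNReal.ofReal_mul (by norm_num : (0:ℝ) ≤ 2)]
  congr 1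
  ring

/-- If `X₁ ~ Laplace(α₁)` and `X₂ ~ Laplace(α₂)` are independent, then `Z = X₁X₂`
has density `f_Z(z) = α₁α₂ K₀(2√(α₁α₂|z|))`. -/
theorem product_laplace_density {Ω : Type*} [MeasurableSpace Ω] (μ : Measure Ω)
    [IsProbabilityMeasure μ] (α1 α2 : ℝ) (h1 : 0 < α1) (h2 : 0 < α2)
    (X1 X2 : Ω → ℝ) (hm1 : Measurable X1) (hm2 : Measurable X2)
    (hInd : IndepFun X1 X2 μ)
    (hX1 : Measure.map X1 μ =
      volume.withDensity (fun x => ENNReal.ofReal ((α1/2) * Real.exp (-α1 * |x|))))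
    (hX2 : Measure.map X2 μ =
      volume.withDensity (fun x => ENNReal.ofReal ((α2/2) * Real.exp (-α2 * |x|)))) :
    Measure.map (fun ω => X1 ω * X2 ω) μ =
      volume.withDensity (fun z => ENNReal.ofReal
        (α1 * α2 * besselK 0 (2 * Real.sqrt (α1 * α2 * |z|)))) := by
  have hpair : Measure.map (fun ω => (X1 ω, X2 ω)) μ = (μ.map X1).prod (μ.map X2) :=
    (indepFun_iff_map_prod_eq_prod_map_map hm1.aemeasurable hm2.aemeasurable).1 hInd
  have hmap : Measure.map (fun ω => X1 ω * X2 ω) μ =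
      Measure.map (fun p : ℝ × ℝ => p.1 * p.2) (Measure.map (fun ω => (X1 ω, X2 ω)) μ) := by
    rw [Measure.map_map measurable_mul (hm1.prodMk hm2)]
    rfl
  have meas1 : Measurable fun x : ℝ => ENNReal.ofReal ((α1/2) * Real.exp (-α1 * |x|)) :=
    (continuous_const.mul (Real.continuous_exp.comp
      (continuous_const.mul continuous_abs))).measurable.ennreal_ofReal
  have meas2 : Measurable fun x : ℝ => ENNReal.ofReal ((α2/2) * Real.exp (-α2 * |x|)) :=
    (continuous_const.mul (Real.continuous_exp.comp
      (continuous_const.mul continuous_abs))).measurable.ennreal_ofReal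
  rw [hmap, hpair, hX1, hX2,
    map_mul_prod _ _ meas1 meas2 (fun _ => ENNReal.ofReal_ne_top)
      (fun _ => ENNReal.ofReal_ne_top)]
  apply withDensity_congr_ae
  have hz_ae : ∀ᵐ z : ℝ, (z : ℝ) ≠ 0 := by
    rw [ae_iff]
    simp only [ne_eq, not_not]
    simpa using Real.volume_singleton
  filter_upwards [hz_ae] with z hz
  exact density_eq h1 h2 hz
end

section
/- Let X₁,…,X_N be i.i.d. Laplace(α) random variables and Z = ∏ X_i. Define the quantile function Q(p) = F_Z^{−1}(p) for 0 < p < 1. Then Q(p) ~ (1/(N^N α))·(−ln(1−p))^N as p → 1⁻, and Q(p) ~ −(1/(N^N α))·(−ln p)^N as p → 0⁺, assuming the tail asymptotics P(Z > z) ~ C z^{(N−1)/(2N)} e^{−N(αz)^{1/N}} as z → ∞ for some constant C > 0 (and symmetrically for the left tail). -/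
/-! If `u ~ C z^β e^{-N (α z)^{1/N}}` with `z → ∞`, taking logarithms gives
`-log u = N (α z)^{1/N} + O(log z)`, hence `-log u ~ N (α z)^{1/N}` and, raising to the `N`-th
power, `z ~ (-log u)^N / (N^N α)`. Applied with `z = Q p` and `u = 1 - p = P(Z > Q p)` (resp.
`z = -Q p` and `u = p`) this gives both quantile asymptotics; that `Q p → ±∞` follows from the
monotonicity of `F` and the positivity of the tails. -/

open MeasureTheory ProbabilityTheory Filter Real Asymptotics Topology

theorem monotone_toReal_measure_setOf_le {Ω α : Type*} [MeasurableSpace Ω] [Preorder α]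
    (μ : Measure Ω) [IsFiniteMeasure μ] (f : Ω → α) :
    Monotone fun z => (μ {ω | f ω ≤ z}).toReal := fun _ _ hab =>
  ENNReal.toReal_mono (measure_ne_top μ _) (measure_mono fun _ h => le_trans h hab)

section Quantile

variable {α β : Type*} [LinearOrder α] [LinearOrder β] [TopologicalSpace β]
  {F : α → β} {Q : β → α} {a : β}

theorem Monotone.tendsto_quantile_atTop [ClosedIicTopology β] (hF : Monotone F)
    (hQ : ∀ᶠ p in 𝓝[<] a, F (Q p) = p) (hFa : ∃ᶠ z in atTop, F z < a) :
    Tendsto Q (𝓝[<] a) atTop := by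
  refine tendsto_atTop.2 fun M => ?_
  obtain ⟨z, hMz, hz⟩ := hFa.forall_exists_of_atTop M
  filter_upwards [hQ, Ioo_mem_nhdsLT hz] with p hFQ hp
  by_contra! hQM
  exact (hFQ ▸ hF (hQM.le.trans hMz)).not_gt hp.1

theorem Monotone.tendsto_quantile_atBot [ClosedIciTopology β] (hF : Monotone F)
    (hQ : ∀ᶠ p in 𝓝[>] a, F (Q p) = p) (hFa : ∃ᶠ z in atBot, a < F z) :
    Tendsto Q (𝓝[>] a) atBot := by
  refine tendsto_atBot.2 fun M => ?_
  obtain ⟨z, hzM, hz⟩ := hFa.forall_exists_of_atBot M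
  filter_upwards [hQ, Ioo_mem_nhdsGT hz] with p hFQ hp
  by_contra! hQM
  exact (hFQ ▸ hF (hzM.trans hQM.le)).not_gt hp.2

end Quantile

noncomputable def weibullTail (N : ℕ) (α C β z : ℝ) : ℝ :=
  C * z ^ β * Real.exp (-(N : ℝ) * (α * z) ^ (1 / (N : ℝ)))

section WeibullTail

variable {N : ℕ} {α C β : ℝ}

theorem weibullTail_pos (hC : 0 < C) {z : ℝ} (hz : 0 < z) : 0 < weibullTail N α C β z := by
  unfold weibullTail; positivity

theorem log_weibullTail (hC : 0 < C) {z : ℝ} (hz : 0 < z) :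
    log (weibullTail N α C β z) = log C + β * log z - N * (α * z) ^ (1 / (N : ℝ)) := by
  rw [weibullTail, log_mul (by positivity) (exp_pos _).ne', log_mul hC.ne' (by positivity),
    log_rpow hz, log_exp, neg_mul, ← sub_eq_add_neg]

theorem isLittleO_log_mul_rpow_atTop (hα : 0 < α) {r : ℝ} (hr : 0 < r) :
    log =o[atTop] fun z => (α * z) ^ r := by
  refine ((isLittleO_const_mul_right_iff (rpow_pos_of_pos hα r).ne').2
    (isLittleO_log_rpow_atTop hr)).congr' EventuallyEq.rfl ?_
  filter_upwards [eventually_ge_atTop 0] with z hz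
  rw [mul_rpow hα.le hz]

variable {ι : Type*} {l : Filter ι} {u z : ι → ℝ}

theorem isEquivalent_neg_log_of_isEquivalent_weibullTail (hN : 0 < N) (hα : 0 < α) (hC : 0 < C)
    (hz : Tendsto z l atTop) (hu : u ~[l] fun t => weibullTail N α C β (z t)) :
    (fun t => -log (u t)) ~[l] fun t => N * (α * z t) ^ (1 / (N : ℝ)) := by
  have hN' : (0 : ℝ) < N := Nat.cast_pos.2 hN
  have hzpos : ∀ᶠ t in l, 0 < z t := hz.eventually_gt_atTop 0
  have hW : ∀ᶠ t in l, 0 < weibullTail N α C β (z t) := hzpos.mono fun t => weibullTail_pos hC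
  have hupos : ∀ᶠ t in l, 0 < u t := hu.eventually_pos hW
  have hw : Tendsto (fun t => (α * z t) ^ (1 / (N : ℝ))) l atTop :=
    (tendsto_rpow_atTop (by positivity)).comp (hz.const_mul_atTop hα)
  have hratio : Tendsto (fun t => log C + log (u t / weibullTail N α C β (z t))) l
      (𝓝 (log C)) := by
    simpa using ((isEquivalent_iff_tendsto_one (hW.mono fun _ h => h.ne')).1 hu).log
      one_ne_zero |>.const_add (log C)
  have hconst : (fun t => log C + log (u t / weibullTail N α C β (z t))) =o[l]
      fun t => (α * z t) ^ (1 / (N : ℝ)) :=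
    (hratio.isBigO_one ℝ).trans_isLittleO
      ((isLittleO_one_left_iff ℝ).2 (tendsto_norm_atTop_atTop.comp hw))
  have hlog : (fun t => β * log (z t)) =o[l] fun t => (α * z t) ^ (1 / (N : ℝ)) :=
    ((isLittleO_log_mul_rpow_atTop hα (by positivity)).comp_tendsto hz).const_mul_left β
  refine IsLittleO.isEquivalent ?_
  refine ((isLittleO_const_mul_right_iff hN'.ne').2 (hlog.add hconst).neg_left).congr' ?_
    EventuallyEq.rfl
  filter_upwards [hzpos, hupos] with t hzt hut
  rw [Pi.sub_apply, log_div hut.ne' (weibullTail_pos hC hzt).ne', log_weibullTail hC hzt]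
  ring

theorem tendsto_div_neg_log_pow_of_isEquivalent_weibullTail (hN : 0 < N) (hα : 0 < α)
    (hC : 0 < C) (hz : Tendsto z l atTop) (hu : u ~[l] fun t => weibullTail N α C β (z t)) :
    Tendsto (fun t => z t / ((1 / ((N : ℝ) ^ N * α)) * (-log (u t)) ^ N)) l (𝓝 1) := by
  have hN' : (N : ℝ) ≠ 0 := Nat.cast_ne_zero.2 hN.ne'
  have hzpos : ∀ᶠ t in l, 0 < z t := hz.eventually_gt_atTop 0
  have hpow : (fun t => (-log (u t)) ^ N) ~[l] fun t => (N : ℝ) ^ N * α * z t := by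
    refine ((isEquivalent_neg_log_of_isEquivalent_weibullTail hN hα hC hz hu).pow N).congr_right
      ?_
    filter_upwards [hzpos] with t hzt
    rw [Pi.pow_apply, mul_pow, ← rpow_natCast ((α * z t) ^ (1 / (N : ℝ))) N,
      ← rpow_mul (by positivity), one_div_mul_cancel hN', rpow_one, mul_assoc]
  have hequiv : z ~[l] fun t => 1 / ((N : ℝ) ^ N * α) * (-log (u t)) ^ N := by
    refine ((IsEquivalent.refl (u := fun _ => 1 / ((N : ℝ) ^ N * α))).mul hpow.symm).congr_left
      (Eventually.of_forall fun t => ?_)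
    simp only [Pi.mul_apply]
    field_simp
  exact (isEquivalent_iff_tendsto_one
    ((hequiv.symm.eventually_pos hzpos).mono fun _ h => h.ne')).1 hequiv

end WeibullTail

theorem quantile_asymptotics_product_laplace_general {Ω : Type*} [MeasurableSpace Ω]
    (μ : Measure Ω) [IsProbabilityMeasure μ] (N : ℕ) (hN : 0 < N) (α : ℝ) (hα : 0 < α)
    (X : Fin N → Ω → ℝ)
    (F : ℝ → ℝ) (hF : ∀ z, F z = (μ {ω | (∏ i, X i ω) ≤ z}).toReal)
    (Q : ℝ → ℝ) (hQ : ∀ p ∈ Set.Ioo (0:ℝ) 1, F (Q p) = p)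
    (C C' : ℝ) (hC : 0 < C) (hC' : 0 < C')
    (htail : Tendsto (fun z => (1 - F z) /
        (C * z ^ (((N:ℝ) - 1)/(2*(N:ℝ))) * Real.exp (-(N:ℝ) * (α*z) ^ (1/(N:ℝ)))))
      atTop (nhds 1))
    (htail' : Tendsto (fun z => F z /
        (C' * (-z) ^ (((N:ℝ) - 1)/(2*(N:ℝ))) * Real.exp (-(N:ℝ) * (-(α*z)) ^ (1/(N:ℝ)))))
      atBot (nhds 1)) :
    Tendsto (fun p => Q p / ((1/((N:ℝ) ^ (N:ℕ) * α)) * (-Real.log (1-p)) ^ (N:ℕ)))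
        (nhdsWithin 1 (Set.Iio 1)) (nhds 1) ∧
      Tendsto (fun p => Q p / (-(1/((N:ℝ) ^ (N:ℕ) * α)) * (-Real.log p) ^ (N:ℕ)))
        (nhdsWithin 0 (Set.Ioi 0)) (nhds 1) := by
  set β : ℝ := ((N:ℝ) - 1) / (2 * (N:ℝ))
  have hFmono : Monotone F := fun a b hab => by
    simpa only [hF] using monotone_toReal_measure_setOf_le μ (fun ω => ∏ i, X i ω) hab
  have hright : (fun z => 1 - F z) ~[atTop] weibullTail N α C β :=
    isEquivalent_of_tendsto_one htail
  have hleft : F ~[atBot] fun z => weibullTail N α C' β (-z) :=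
    isEquivalent_of_tendsto_one (by simpa only [Pi.div_def, weibullTail, mul_neg] using htail')
  have hQ1 : ∀ᶠ p in 𝓝[<] 1, F (Q p) = p := eventually_of_mem (Ioo_mem_nhdsLT one_pos) hQ
  have hQ0 : ∀ᶠ p in 𝓝[>] 0, F (Q p) = p := eventually_of_mem (Ioo_mem_nhdsGT one_pos) hQ
  have hQtop : Tendsto Q (𝓝[<] 1) atTop := hFmono.tendsto_quantile_atTop hQ1 <|
    (hright.eventually_pos ((eventually_gt_atTop 0).mono fun _ => weibullTail_pos hC)).frequently
      |>.mono fun _ => sub_pos.1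
  have hQbot : Tendsto Q (𝓝[>] 0) atBot := hFmono.tendsto_quantile_atBot hQ0 <|
    (hleft.eventually_pos ((eventually_lt_atBot 0).mono fun _ hz =>
      weibullTail_pos hC' (neg_pos.2 hz))).frequently
  have hupper : (fun p => 1 - p) ~[𝓝[<] 1] fun p => weibullTail N α C β (Q p) :=
    (hright.comp_tendsto hQtop).congr_left
      (hQ1.mono fun p hp => by simp only [Function.comp_apply, hp])
  have hlower : (fun p => p) ~[𝓝[>] 0] fun p => weibullTail N α C' β (-Q p) :=
    (hleft.comp_tendsto hQbot).congr_left
      (hQ0.mono fun p hp => by simp only [Function.comp_apply, hp])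
  refine ⟨tendsto_div_neg_log_pow_of_isEquivalent_weibullTail hN hα hC hQtop hupper, ?_⟩
  refine (tendsto_div_neg_log_pow_of_isEquivalent_weibullTail hN hα hC'
    (tendsto_neg_atBot_atTop.comp hQbot) hlower).congr fun p => ?_
  simp only [Function.comp_apply, neg_mul, div_neg, neg_div]

/-- Quantile asymptotics for the product of `N` i.i.d. `Laplace(α)` random variables:
if `F_Z` is the CDF of `Z = ∏ᵢ Xᵢ`, `Q = F_Z⁻¹`, and the tail asymptotics
`P(Z > z) ~ C z^{(N−1)/(2N)} e^{−N(αz)^{1/N}}` as `z → ∞` (and symmetrically for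
the left tail) hold, then `Q(p) ~ (1/(N^N α))(−ln(1−p))^N` as `p → 1⁻` and
`Q(p) ~ −(1/(N^N α))(−ln p)^N` as `p → 0⁺`. -/
theorem quantile_asymptotics_product_laplace {Ω : Type*} [MeasurableSpace Ω]
    (μ : Measure Ω) [IsProbabilityMeasure μ] (N : ℕ) (hN : 0 < N) (α : ℝ) (hα : 0 < α)
    (X : Fin N → Ω → ℝ) (hXm : ∀ i, Measurable (X i))
    (hInd : iIndepFun X μ)
    (hlaplace : ∀ i, Measure.map (X i) μ =
      volume.withDensity (fun x => ENNReal.ofReal ((α/2) * Real.exp (-α * |x|))))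
    (F : ℝ → ℝ) (hF : ∀ z, F z = (μ {ω | (∏ i, X i ω) ≤ z}).toReal)
    (Q : ℝ → ℝ) (hQ : ∀ p ∈ Set.Ioo (0:ℝ) 1, F (Q p) = p)
    (C C' : ℝ) (hC : 0 < C) (hC' : 0 < C')
    (htail : Tendsto (fun z => (1 - F z) /
        (C * z ^ (((N:ℝ) - 1)/(2*(N:ℝ))) * Real.exp (-(N:ℝ) * (α*z) ^ (1/(N:ℝ)))))
      atTop (nhds 1))
    (htail' : Tendsto (fun z => F z /
        (C' * (-z) ^ (((N:ℝ) - 1)/(2*(N:ℝ))) * Real.exp (-(N:ℝ) * (-(α*z)) ^ (1/(N:ℝ)))))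
      atBot (nhds 1)) :
    Tendsto (fun p => Q p / ((1/((N:ℝ) ^ (N:ℕ) * α)) * (-Real.log (1-p)) ^ (N:ℕ)))
        (nhdsWithin 1 (Set.Iio 1)) (nhds 1) ∧
      Tendsto (fun p => Q p / (-(1/((N:ℝ) ^ (N:ℕ) * α)) * (-Real.log p) ^ (N:ℕ)))
        (nhdsWithin 0 (Set.Ioi 0)) (nhds 1) :=
  quantile_asymptotics_product_laplace_general μ N hN α hα X F hF Q hQ C C' hC hC' htail htail'
end
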